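/- Let G be a weighted graph on vertex set {1,…,n} and let x_1,…,x_n be complex numbers. If Im(x_i) > 0 for every vertex i, or if |x_i| > 2·√(B_G) for every vertex i, then the multivariate matching polynomial satisfies μ(G)(x_1,…,x_n) ≠ 0. -/

import Mathlib

open Polynomial
open scoped Classical

/-- A matching of the weighted graph with edge weights `lam`, inside the vertex set `A`:
a set of pairs `(j,k)` with `j < k`, `lam j k ≠ 0`, endpoints in `A`,
no two pairs sharing a vertex. -/
def IsMatching {n : ℕ} (lam : Fin n → Fin n → ℝ) (A : Finset (Fin n))
    (M : Finset (Fin n × Fin n)) : Prop :=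
  (∀ e ∈ M, e.1 < e.2 ∧ lam e.1 e.2 ≠ 0 ∧ e.1 ∈ A ∧ e.2 ∈ A) ∧
  ∀ e ∈ M, ∀ f ∈ M, e ≠ f → e.1 ≠ f.1 ∧ e.1 ≠ f.2 ∧ e.2 ≠ f.1 ∧ e.2 ≠ f.2

/-- The vertices covered by a matching. -/
def mVerts {n : ℕ} (M : Finset (Fin n × Fin n)) : Finset (Fin n) :=
  M.image Prod.fst ∪ M.image Prod.snd

/-- The finite set of matchings inside the vertex set `A`. -/
noncomputable def matchings {n : ℕ} (lam : Fin n → Fin n → ℝ) (A : Finset (Fin n)) :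
    Finset (Finset (Fin n × Fin n)) :=
  Finset.univ.filter fun M => IsMatching lam A M

/-- The weighted matching polynomial of the induced weighted subgraph on the vertex set `A`
(the matching polynomial of the empty graph is `1`). -/
noncomputable def mu {n : ℕ} (r : Fin n → ℝ) (lam : Fin n → Fin n → ℝ)
    (A : Finset (Fin n)) : Polynomial ℝ :=
  ∑ M ∈ matchings lam A,
    (∏ i ∈ A \ mVerts M, (X - C (r i))) * C (∏ e ∈ M, lam e.1 e.2)

/-- The multivariate matching polynomial evaluated at the complex numbers `x 1, …, x n`. -/
noncomputable def muC {n : ℕ} (lam : Fin n → Fin n → ℝ) (x : Fin n → ℂ) : ℂ :=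
  ∑ M ∈ matchings lam (Finset.univ : Finset (Fin n)),
    (∏ i ∈ Finset.univ \ mVerts M, x i) * ∏ e ∈ M, (lam e.1 e.2 : ℂ)

/-- The constant `B_G`: for `n ≥ 3` the maximum over vertices `j` and sets
`A ⊆ [n] ∖ {j}` with `|A| = n - 2` of `∑_{k ∈ A} (-λ_{jk})`; `-λ_{12}/4` for `n = 2`;
`0` for `n = 1`. -/
noncomputable def BG (n : ℕ) (lam : Fin n → Fin n → ℝ) : ℝ :=
  if 3 ≤ n then
    sSup {S : ℝ | ∃ j : Fin n, ∃ A : Finset (Fin n),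
      j ∉ A ∧ A.card = n - 2 ∧ S = ∑ k ∈ A, -lam j k}
  else if h : n = 2 then -lam ⟨0, by omega⟩ ⟨1, by omega⟩ / 4
  else 0

/-- `l` is a path from `i` to `j` inside the vertex set `A`: a nonempty list of distinct
vertices of `A`, starting at `i`, ending at `j`, with consecutive vertices joined by
edges of nonzero weight. -/
def IsPathIn {n : ℕ} (lam : Fin n → Fin n → ℝ) (A : Finset (Fin n)) (i j : Fin n)
    (l : List (Fin n)) : Prop :=
  l ≠ [] ∧ l.Nodup ∧ (∀ v ∈ l, v ∈ A) ∧ l.head? = some i ∧ l.getLast? = some j ∧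
    l.Chain' fun u v => lam u v ≠ 0

/-- `λ_c`: the product of `-λ_e` over the edges `e` of the path `c` (equal to `1` for a
trivial path). -/
def pathWeight {n : ℕ} (lam : Fin n → Fin n → ℝ) (l : List (Fin n)) : ℝ :=
  ((l.zip l.tail).map fun p => -lam p.1 p.2).prod

/-- A real polynomial viewed as a rational function. -/
noncomputable def toRF (p : Polynomial ℝ) : RatFunc ℝ :=
  algebraMap (Polynomial ℝ) (RatFunc ℝ) p

/-- The graph continued fraction `α_v = μ(A)/μ(A ∖ v)` as a rational function. -/
noncomputable def alpha {n : ℕ} (r : Fin n → ℝ) (lam : Fin n → Fin n → ℝ) (v : Fin n)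
    (A : Finset (Fin n)) : RatFunc ℝ :=
  toRF (mu r lam A) / toRF (mu r lam (A.erase v))

/-- `λ_{i∼j} = -(∑_{c ∈ [i→j]} λ_c · μ(A∖c)²) / μ(A∖{i,j})²` as a rational function. -/
noncomputable def lamSim {n : ℕ} (r : Fin n → ℝ) (lam : Fin n → Fin n → ℝ) (i j : Fin n)
    (A : Finset (Fin n)) : RatFunc ℝ :=
  -(∑ᶠ l ∈ {l : List (Fin n) | IsPathIn lam A i j l},
      toRF (C (pathWeight lam l) * mu r lam (A \ l.toFinset) ^ 2)) /
    toRF (mu r lam ((A.erase i).erase j)) ^ 2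

/-- The value of a rational function at `θ`, taken after cancelling common factors;
`none` encodes the value `∞` (a pole). -/
noncomputable def valAt (f : RatFunc ℝ) (θ : ℝ) : Option ℝ :=
  if f.denom.eval θ = 0 then none else some (f.num.eval θ / f.denom.eval θ)

/-- The set `0_{θ,A}` of θ-essential vertices: `m_θ(A∖v) = m_θ(A) - 1`. -/
def zeroSet {n : ℕ} (r : Fin n → ℝ) (lam : Fin n → Fin n → ℝ) (θ : ℝ)
    (A : Finset (Fin n)) : Set (Fin n) :=
  {v | v ∈ A ∧
    (mu r lam A).rootMultiplicity θ = (mu r lam (A.erase v)).rootMultiplicity θ + 1}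

/-- The set `∞_{θ,A}`: `m_θ(A∖v) = m_θ(A) + 1`. -/
def infSet {n : ℕ} (r : Fin n → ℝ) (lam : Fin n → Fin n → ℝ) (θ : ℝ)
    (A : Finset (Fin n)) : Set (Fin n) :=
  {v | v ∈ A ∧
    (mu r lam (A.erase v)).rootMultiplicity θ = (mu r lam A).rootMultiplicity θ + 1}

/-- The set `+_{θ,A}`: `m_θ(A∖v) = m_θ(A)` and `α_v(A)(θ) > 0`. -/
def plusSet {n : ℕ} (r : Fin n → ℝ) (lam : Fin n → Fin n → ℝ) (θ : ℝ)
    (A : Finset (Fin n)) : Set (Fin n) :=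
  {v | v ∈ A ∧
    (mu r lam (A.erase v)).rootMultiplicity θ = (mu r lam A).rootMultiplicity θ ∧
    ∃ t : ℝ, valAt (alpha r lam v A) θ = some t ∧ 0 < t}

/-- The set `−_{θ,A}`: `m_θ(A∖v) = m_θ(A)` and `α_v(A)(θ) < 0`. -/
def minusSet {n : ℕ} (r : Fin n → ℝ) (lam : Fin n → Fin n → ℝ) (θ : ℝ)
    (A : Finset (Fin n)) : Set (Fin n) :=
  {v | v ∈ A ∧
    (mu r lam (A.erase v)).rootMultiplicity θ = (mu r lam A).rootMultiplicity θ ∧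
    ∃ t : ℝ, valAt (alpha r lam v A) θ = some t ∧ t < 0}

/-- The frontier `∂0_{θ,A}`: vertices not in `0_{θ,A}` with a neighbor in `0_{θ,A}`. -/
def frontierZero {n : ℕ} (r : Fin n → ℝ) (lam : Fin n → Fin n → ℝ) (θ : ℝ)
    (A : Finset (Fin n)) : Set (Fin n) :=
  {v | v ∈ A ∧ v ∉ zeroSet r lam θ A ∧ ∃ w ∈ zeroSet r lam θ A, lam v w ≠ 0}

/-- The underlying simple graph: edges are the pairs with nonzero edge weight. -/
def wGraph {n : ℕ} (lam : Fin n → Fin n → ℝ) : SimpleGraph (Fin n) :=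
  SimpleGraph.fromRel fun j k => lam j k ≠ 0

/-!
Expanding along a vertex `v` gives `μ(A) = x_v μ(A∖v) + ∑_u λ_{vu} μ(A∖v∖u)`, so the ratio
`μ(A)/μ(A∖v)` equals `x_v + ∑_u λ_{vu} / (μ(A∖v)/μ(A∖v∖u))`. By induction on `A` all these
ratios stay in a region avoiding `0` that this continued-fraction step preserves: the open upper
half plane (for `λ ≤ 0` every `λ/r` lies in the closed upper half plane), or `{|z| > √B_G}` when
all `|x_i| > 2√B_G`, because a vertex of a proper subset `A` has at most `n - 2` neighbours in
`A∖v`, so the neighbour sum has modulus at most `B_G/√B_G`. On the full vertex set that sum is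
only bounded by `2√B_G` (for `n ≥ 3`), which still keeps `x_v + ∑` away from `0`. For `n = 2`,
where `B_G` is defined differently, `μ = x₁x₂ + λ₁₂` is checked directly.
-/

variable {n : ℕ}

noncomputable def matchingWeight (lam : Fin n → Fin n → ℝ) (x : Fin n → ℂ) (A : Finset (Fin n))
    (M : Finset (Fin n × Fin n)) : ℂ :=
  (∏ i ∈ A \ mVerts M, x i) * ∏ e ∈ M, (lam e.1 e.2 : ℂ)

noncomputable def muCOn (lam : Fin n → Fin n → ℝ) (x : Fin n → ℂ) (A : Finset (Fin n)) : ℂ :=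
  ∑ M ∈ matchings lam A, matchingWeight lam x A M

theorem muC_eq_muCOn_univ (lam : Fin n → Fin n → ℝ) (x : Fin n → ℂ) :
    muC lam x = muCOn lam x Finset.univ :=
  rfl

section Matchings

variable {lam : Fin n → Fin n → ℝ} {A : Finset (Fin n)} {M : Finset (Fin n × Fin n)}
  {e : Fin n × Fin n} {v : Fin n}

theorem mem_matchings : M ∈ matchings lam A ↔ IsMatching lam A M := by
  simp [matchings]

theorem mem_mVerts {i : Fin n} : i ∈ mVerts M ↔ ∃ e ∈ M, e.1 = i ∨ e.2 = i := by
  simp only [mVerts, Finset.mem_union, Finset.mem_image]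
  grind

theorem mVerts_insert : mVerts (insert e M) = insert e.1 (insert e.2 (mVerts M)) := by
  ext
  simp only [mVerts, Finset.image_insert, Finset.mem_union, Finset.mem_insert]
  tauto

theorem matchings_empty : matchings lam ∅ = {∅} := by
  ext M
  simp only [mem_matchings, IsMatching, Finset.mem_singleton, Finset.notMem_empty, and_false,
    imp_false]
  constructor
  · exact fun h => Finset.eq_empty_of_forall_notMem h.1
  · rintro rfl
    simp

theorem isMatching_erase_iff :
    IsMatching lam (A.erase v) M ↔ IsMatching lam A M ∧ v ∉ mVerts M := by
  simp only [IsMatching, mem_mVerts, Finset.mem_erase]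
  grind

theorem isMatching_insert_iff (he : e ∉ M) :
    IsMatching lam A (insert e M) ↔
      (e.1 < e.2 ∧ lam e.1 e.2 ≠ 0 ∧ e.1 ∈ A ∧ e.2 ∈ A) ∧ IsMatching lam (A \ {e.1, e.2}) M := by
  have hne : ∀ f ∈ M, f ≠ e := fun f hf => ne_of_mem_of_not_mem hf he
  simp only [IsMatching, Finset.forall_mem_insert]
  simp only [Finset.mem_sdiff, Finset.mem_insert, Finset.mem_singleton]
  constructor
  · rintro ⟨⟨he', hedges⟩, ⟨-, hedisj⟩, hdisj⟩
    refine ⟨he', fun f hf => ?_, fun f hf g hg => (hdisj f hf).2 g hg⟩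
    have := (hdisj f hf).1 (hne f hf)
    grind
  · rintro ⟨he', hedges, hdisj⟩
    refine ⟨⟨he', fun f hf => ?_⟩, ⟨by simp, fun f hf _ => ?_⟩,
      fun f hf => ⟨fun _ => ?_, hdisj f hf⟩⟩
    all_goals have := hedges f hf
    all_goals grind

end Matchings

section OrderedEdge

variable {lam : Fin n → Fin n → ℝ} {A : Finset (Fin n)} {M : Finset (Fin n × Fin n)}
  {v u u' : Fin n}

def orderedEdge (v u : Fin n) : Fin n × Fin n := (min v u, max v u)

theorem orderedEdge_fst_lt_snd (h : v ≠ u) : (orderedEdge v u).1 < (orderedEdge v u).2 :=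
  min_lt_max.2 h

theorem lam_orderedEdge (hsym : ∀ j k, lam j k = lam k j) :
    lam (orderedEdge v u).1 (orderedEdge v u).2 = lam v u := by
  rcases le_total v u with h | h <;> simp [orderedEdge, h, hsym u v]

theorem orderedEdge_endpoints :
    ({(orderedEdge v u).1, (orderedEdge v u).2} : Finset (Fin n)) = {v, u} := by
  rcases le_total v u with h | h <;> simp [orderedEdge, h, Finset.pair_comm]

theorem eq_of_orderedEdge_mem (hM : IsMatching lam A M) (hu : orderedEdge v u ∈ M)
    (hu' : orderedEdge v u' ∈ M) : u = u' := by
  have hlt := (hM.1 _ hu).1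
  have hlt' := (hM.1 _ hu').1
  by_cases heq : orderedEdge v u = orderedEdge v u'
  · simp only [orderedEdge, Prod.mk.injEq] at heq hlt hlt'
    grind
  · have := hM.2 _ hu _ hu' heq
    simp only [orderedEdge] at this hlt hlt'
    grind

theorem filter_mem_mVerts_eq_biUnion :
    {M ∈ matchings lam A | v ∈ mVerts M} =
      (A.erase v).biUnion fun u => {M ∈ matchings lam A | orderedEdge v u ∈ M} := by
  ext M
  simp only [Finset.mem_filter, Finset.mem_biUnion, Finset.mem_erase, mem_matchings]
  constructor
  · rintro ⟨hM, hv⟩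
    obtain ⟨e, he, hve⟩ := mem_mVerts.1 hv
    obtain ⟨hlt, -, he1, he2⟩ := hM.1 e he
    rcases hve with rfl | rfl
    · exact ⟨e.2, ⟨hlt.ne', he2⟩, hM, by simpa [orderedEdge, hlt.le] using he⟩
    · exact ⟨e.1, ⟨hlt.ne, he1⟩, hM, by simpa [orderedEdge, hlt.le] using he⟩
  · rintro ⟨u, -, hM, hu⟩
    refine ⟨hM, mem_mVerts.2 ⟨_, hu, ?_⟩⟩
    rcases le_total v u with h | h <;> simp [orderedEdge, h]

theorem pairwiseDisjoint_filter_orderedEdge_mem :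
    (A.erase v : Set (Fin n)).PairwiseDisjoint
      fun u => {M ∈ matchings lam A | orderedEdge v u ∈ M} := fun _ _ _ _ hne =>
  Finset.disjoint_filter.2 fun _ hM hu hu' =>
    hne (eq_of_orderedEdge_mem (mem_matchings.1 hM) hu hu')

end OrderedEdge


section Recursion

variable {lam : Fin n → Fin n → ℝ} {x : Fin n → ℂ} {A : Finset (Fin n)}
  {M : Finset (Fin n × Fin n)} {e : Fin n × Fin n} {v u : Fin n}

theorem muCOn_empty : muCOn lam x ∅ = 1 := by
  simp [muCOn, matchingWeight, matchings_empty]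

theorem matchingWeight_of_notMem_mVerts (hv : v ∈ A) (hvM : v ∉ mVerts M) :
    matchingWeight lam x A M = x v * matchingWeight lam x (A.erase v) M := by
  rw [matchingWeight, matchingWeight, Finset.erase_sdiff_comm, ← mul_assoc,
    Finset.mul_prod_erase _ _ (Finset.mem_sdiff.2 ⟨hv, hvM⟩)]

theorem matchingWeight_insert (he : e ∉ M) :
    matchingWeight lam x A (insert e M) =
      lam e.1 e.2 * matchingWeight lam x (A \ {e.1, e.2}) M := by
  rw [matchingWeight, matchingWeight, Finset.prod_insert he, mVerts_insert, sdiff_sdiff_left,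
    Finset.sup_eq_union, Finset.insert_union, Finset.singleton_union]
  ring

theorem sum_matchingWeight_filter_notMem_mVerts (hv : v ∈ A) :
    ∑ M ∈ matchings lam A with v ∉ mVerts M, matchingWeight lam x A M =
      x v * muCOn lam x (A.erase v) := by
  have hfilter : {M ∈ matchings lam A | v ∉ mVerts M} = matchings lam (A.erase v) := by
    ext M
    simp only [Finset.mem_filter, mem_matchings, isMatching_erase_iff]
  rw [hfilter, muCOn, Finset.mul_sum]
  exact Finset.sum_congr rfl fun M hM =>
    matchingWeight_of_notMem_mVerts hv (isMatching_erase_iff.1 (mem_matchings.1 hM)).2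

theorem notMem_of_isMatching_sdiff (hM : IsMatching lam (A \ {e.1, e.2}) M) : e ∉ M := fun he =>
  (Finset.mem_sdiff.1 (hM.1 e he).2.2.1).2 (Finset.mem_insert_self _ _)

theorem sum_matchingWeight_filter_mem (he : e.1 < e.2) (he1 : e.1 ∈ A) (he2 : e.2 ∈ A) :
    ∑ M ∈ matchings lam A with e ∈ M, matchingWeight lam x A M =
      lam e.1 e.2 * muCOn lam x (A \ {e.1, e.2}) := by
  by_cases hlam : lam e.1 e.2 = 0
  · rw [hlam, Complex.ofReal_zero, zero_mul]
    refine Finset.sum_eq_zero fun M hM => ?_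
    simp only [Finset.mem_filter, mem_matchings] at hM
    exact absurd hlam (hM.1.1 e hM.2).2.1
  rw [muCOn, Finset.mul_sum]
  refine Finset.sum_nbij' (fun M => M.erase e) (insert e) (fun M hM => ?_) (fun M hM => ?_)
    (fun M hM => Finset.insert_erase (Finset.mem_filter.1 hM).2)
    (fun M hM => Finset.erase_insert (notMem_of_isMatching_sdiff (mem_matchings.1 hM)))
    (fun M hM => ?_)
  · simp only [Finset.mem_filter, mem_matchings] at hM ⊢
    rw [← Finset.insert_erase hM.2, isMatching_insert_iff (Finset.notMem_erase e M)] at hM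
    exact hM.1.2
  · rw [mem_matchings] at hM
    simp only [Finset.mem_filter, mem_matchings, Finset.mem_insert_self, and_true]
    exact (isMatching_insert_iff (notMem_of_isMatching_sdiff hM)).2 ⟨⟨he, hlam, he1, he2⟩, hM⟩
  · conv_lhs => rw [← Finset.insert_erase (Finset.mem_filter.1 hM).2]
    exact matchingWeight_insert (Finset.notMem_erase e M)

theorem muCOn_eq_add_sum (hsym : ∀ j k, lam j k = lam k j) (x : Fin n → ℂ) (hv : v ∈ A) :
    muCOn lam x A = x v * muCOn lam x (A.erase v) +
      ∑ u ∈ A.erase v, lam v u * muCOn lam x ((A.erase v).erase u) := by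
  rw [muCOn, ← Finset.sum_filter_add_sum_filter_not _ (fun M => v ∈ mVerts M), add_comm,
    sum_matchingWeight_filter_notMem_mVerts hv, filter_mem_mVerts_eq_biUnion,
    Finset.sum_biUnion pairwiseDisjoint_filter_orderedEdge_mem]
  congr 1
  refine Finset.sum_congr rfl fun u hu => ?_
  have hpair : ({v, u} : Finset (Fin n)) ⊆ A :=
    Finset.insert_subset hv (Finset.singleton_subset_iff.2 (Finset.mem_of_mem_erase hu))
  have hends : {(orderedEdge v u).1, (orderedEdge v u).2} ⊆ A := by
    rwa [orderedEdge_endpoints]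
  rw [sum_matchingWeight_filter_mem (orderedEdge_fst_lt_snd (Finset.ne_of_mem_erase hu).symm)
      (hends (by simp)) (hends (by simp)), lam_orderedEdge hsym, orderedEdge_endpoints,
    Finset.sdiff_insert, Finset.sdiff_singleton_eq_erase, Finset.erase_right_comm]

end Recursion

section NonVanishing

variable {lam : Fin n → Fin n → ℝ} {x : Fin n → ℂ}

theorem muCOn_eq_mul (hsym : ∀ j k, lam j k = lam k j) {A : Finset (Fin n)} {v : Fin n}
    (hv : v ∈ A) (h : muCOn lam x (A.erase v) ≠ 0) :
    muCOn lam x A = muCOn lam x (A.erase v) * (x v + ∑ u ∈ A.erase v,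
      lam v u / (muCOn lam x (A.erase v) / muCOn lam x ((A.erase v).erase u))) := by
  rw [muCOn_eq_add_sum hsym x hv, mul_add, Finset.mul_sum]
  congr 1
  · ring
  · refine Finset.sum_congr rfl fun u _ => ?_
    field_simp

theorem muCOn_ne_zero_and_div_mem (hsym : ∀ j k, lam j k = lam k j) {S : Set ℂ} (hS : 0 ∉ S)
    {D : Finset (Fin n)}
    (hstep : ∀ A ⊆ D, ∀ v ∈ A, ∀ r : Fin n → ℂ, (∀ u ∈ A.erase v, r u ∈ S) →
      x v + ∑ u ∈ A.erase v, lam v u / r u ∈ S) :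
    ∀ A ⊆ D, muCOn lam x A ≠ 0 ∧ ∀ v ∈ A, muCOn lam x A / muCOn lam x (A.erase v) ∈ S := by
  intro A
  induction A using Finset.strongInduction with
  | H A ih =>
  intro hAD
  have hdiv : ∀ v ∈ A, muCOn lam x (A.erase v) ≠ 0 ∧
      muCOn lam x A / muCOn lam x (A.erase v) ∈ S := by
    intro v hv
    obtain ⟨hne, hmem⟩ := ih _ (Finset.erase_ssubset hv) ((Finset.erase_subset v A).trans hAD)
    refine ⟨hne, ?_⟩
    rw [muCOn_eq_mul hsym hv hne, mul_div_cancel_left₀ _ hne]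
    exact hstep A hAD v hv _ hmem
  refine ⟨?_, fun v hv => (hdiv v hv).2⟩
  rcases A.eq_empty_or_nonempty with rfl | ⟨v, hv⟩
  · simp [muCOn_empty]
  · obtain ⟨hne, hmem⟩ := hdiv v hv
    rw [← div_mul_cancel₀ (muCOn lam x A) hne]
    exact mul_ne_zero (fun h => hS (h ▸ hmem)) hne

theorem im_ofReal_div_nonneg {c : ℝ} (hc : c ≤ 0) {z : ℂ} (hz : 0 < z.im) :
    0 ≤ ((c : ℂ) / z).im := by
  rw [Complex.div_im]
  simp only [Complex.ofReal_im, Complex.ofReal_re, zero_mul, zero_div, zero_sub]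
  exact neg_nonneg.2 (div_nonpos_of_nonpos_of_nonneg (mul_nonpos_of_nonpos_of_nonneg hc hz.le)
    (Complex.normSq_nonneg z))

theorem muC_ne_zero_of_forall_im_pos (hsym : ∀ j k, lam j k = lam k j)
    (hnonpos : ∀ j k, lam j k ≤ 0) (hx : ∀ i, 0 < (x i).im) : muC lam x ≠ 0 := by
  refine (muCOn_ne_zero_and_div_mem hsym (S := {z | 0 < z.im}) (by simp) (D := Finset.univ)
    (fun A _ v _ r hr => ?_) _ subset_rfl).1
  show 0 < (x v + _).im
  rw [Complex.add_im, Complex.im_sum]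
  exact add_pos_of_pos_of_nonneg (hx v)
    (Finset.sum_nonneg fun u hu => im_ofReal_div_nonneg (hnonpos v u) (hr u hu))

theorem norm_sum_ofReal_div_le {ι : Type*} {s : Finset ι} {c : ι → ℝ} {r : ι → ℂ} {b K : ℝ}
    (hb : 0 ≤ b) (hK : 0 ≤ K) (hc : ∀ i ∈ s, c i ≤ 0) (hr : ∀ i ∈ s, b < ‖r i‖)
    (hsum : ∑ i ∈ s, -c i ≤ K * b) : ‖∑ i ∈ s, (c i : ℂ) / r i‖ ≤ K := by
  rcases hb.eq_or_lt with rfl | hb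
  · have hzero : ∀ i ∈ s, -c i = 0 :=
      (Finset.sum_eq_zero_iff_of_nonneg fun i hi => neg_nonneg.2 (hc i hi)).1
        (le_antisymm (by simpa using hsum) (Finset.sum_nonneg fun i hi => neg_nonneg.2 (hc i hi)))
    rw [Finset.sum_eq_zero fun i hi => by simp [neg_eq_zero.1 (hzero i hi)], norm_zero]
    exact hK
  calc ‖∑ i ∈ s, (c i : ℂ) / r i‖ ≤ ∑ i ∈ s, ‖(c i : ℂ) / r i‖ := norm_sum_le _ _
    _ ≤ ∑ i ∈ s, -c i / b := Finset.sum_le_sum fun i hi => by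
      rw [norm_div, Complex.norm_real, Real.norm_of_nonpos (hc i hi)]
      exact div_le_div_of_nonneg_left (neg_nonneg.2 (hc i hi)) hb (hr i hi).le
    _ = (∑ i ∈ s, -c i) / b := (Finset.sum_div _ _ _).symm
    _ ≤ K := (div_le_iff₀ hb).2 hsum

theorem muC_ne_zero_of_norm_gt (hsym : ∀ j k, lam j k = lam k j)
    (hnonpos : ∀ j k, lam j k ≤ 0) {b : ℝ} (hb : 0 ≤ b)
    (hsub : ∀ v, ∀ T ⊆ Finset.univ.erase v, T.card + 2 ≤ n → ∑ k ∈ T, -lam v k ≤ b ^ 2)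
    (hall : ∀ v, ∑ k ∈ Finset.univ.erase v, -lam v k ≤ 2 * b ^ 2)
    (hx : ∀ i, 2 * b < ‖x i‖) : muC lam x ≠ 0 := by
  rw [muC_eq_muCOn_univ]
  rcases (Finset.univ : Finset (Fin n)).eq_empty_or_nonempty with huniv | ⟨w, hw⟩
  · rw [huniv, muCOn_empty]
    exact one_ne_zero
  have hcard : (Finset.univ.erase w).card + 1 = n := by
    rw [Finset.card_erase_add_one hw, Finset.card_univ, Fintype.card_fin]
  have hstep : ∀ A ⊆ Finset.univ.erase w, ∀ v ∈ A, ∀ r : Fin n → ℂ,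
      (∀ u ∈ A.erase v, r u ∈ {z : ℂ | b < ‖z‖}) →
        x v + ∑ u ∈ A.erase v, lam v u / r u ∈ {z : ℂ | b < ‖z‖} := by
    intro A hA v hv r hr
    have hAv : (A.erase v).card + 2 ≤ n := by
      have := Finset.card_le_card hA
      rw [← Finset.card_erase_add_one hv] at this
      omega
    have hsum := norm_sum_ofReal_div_le hb hb (fun u _ => hnonpos v u) hr
      (by rw [← sq]; exact hsub v _ (Finset.erase_subset_erase v (Finset.subset_univ A)) hAv)
    exact lt_of_lt_of_le (by linarith [hx v]) (norm_sub_le_norm_add _ _)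
  obtain ⟨hne, hmem⟩ := muCOn_ne_zero_and_div_mem hsym (by simpa using hb) hstep _ subset_rfl
  rw [muCOn_eq_mul hsym hw hne]
  refine mul_ne_zero hne fun h => ?_
  have hsum := norm_sum_ofReal_div_le (K := 2 * b) hb (by positivity) (fun u _ => hnonpos w u) hmem
    (by rw [mul_assoc, ← sq]; exact hall w)
  have := (norm_sub_le_norm_add _ _).trans_eq (congrArg norm h)
  rw [norm_zero] at this
  linarith [hx w]

end NonVanishing

section BG

variable {lam : Fin n → Fin n → ℝ}

theorem sum_neg_le_BG (hn : 3 ≤ n) (hnonpos : ∀ j k, lam j k ≤ 0) {v : Fin n}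
    {T : Finset (Fin n)} (hT : T ⊆ Finset.univ.erase v) (hcard : T.card + 2 ≤ n) :
    ∑ k ∈ T, -lam v k ≤ BG n lam := by
  obtain ⟨T', hTT', hT'v, hT'card⟩ := Finset.exists_subsuperset_card_eq hT (n := n - 2)
    (by omega) (by simp; omega)
  have hbdd : BddAbove {S : ℝ | ∃ j : Fin n, ∃ A : Finset (Fin n),
      j ∉ A ∧ A.card = n - 2 ∧ S = ∑ k ∈ A, -lam j k} :=
    ((Set.finite_range fun p : Fin n × Finset (Fin n) => ∑ k ∈ p.2, -lam p.1 k).subset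
      (by rintro _ ⟨j, A, -, -, rfl⟩; exact ⟨(j, A), rfl⟩)).bddAbove
  calc ∑ k ∈ T, -lam v k ≤ ∑ k ∈ T', -lam v k :=
        Finset.sum_le_sum_of_subset_of_nonneg hTT' fun k _ _ => neg_nonneg.2 (hnonpos v k)
    _ ≤ BG n lam := by
      rw [BG, if_pos hn]
      exact le_csSup hbdd ⟨v, T', fun h => by simpa using hT'v h, hT'card, rfl⟩

theorem BG_two (lam : Fin 2 → Fin 2 → ℝ) : BG 2 lam = -lam 0 1 / 4 := rfl

theorem BG_nonneg (hnonpos : ∀ j k, lam j k ≤ 0) : 0 ≤ BG n lam := by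
  by_cases hn : 3 ≤ n
  · simpa using sum_neg_le_BG hn hnonpos (v := ⟨0, by omega⟩) (Finset.empty_subset _)
      (by simp; omega)
  · rw [BG, if_neg hn]
    split_ifs
    · exact div_nonneg (neg_nonneg.2 (hnonpos _ _)) (by norm_num)
    · rfl

theorem sum_erase_neg_le_two_mul_BG (hn : n ≠ 2) (hnonpos : ∀ j k, lam j k ≤ 0) (v : Fin n) :
    ∑ k ∈ Finset.univ.erase v, -lam v k ≤ 2 * BG n lam := by
  have hcard : (Finset.univ.erase v).card + 1 = n := by
    rw [Finset.card_erase_add_one (Finset.mem_univ v), Finset.card_univ, Fintype.card_fin]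
  by_cases h3 : 3 ≤ n
  · obtain ⟨u, hu⟩ : (Finset.univ.erase v).Nonempty := Finset.card_pos.1 (by omega)
    rw [← Finset.add_sum_erase _ _ hu, two_mul]
    refine add_le_add ?_ (sum_neg_le_BG h3 hnonpos (Finset.erase_subset _ _) ?_)
    · simpa using sum_neg_le_BG h3 hnonpos (Finset.singleton_subset_iff.2 hu) (by simp; omega)
    · rw [← Finset.card_erase_add_one hu] at hcard
      omega
  · rw [Finset.card_eq_zero.1 (by omega : (Finset.univ.erase v).card = 0), Finset.sum_empty]
    linarith [BG_nonneg (n := n) hnonpos]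

end BG

theorem muC_fin_two {lam : Fin 2 → Fin 2 → ℝ} (hsym : ∀ j k, lam j k = lam k j)
    (x : Fin 2 → ℂ) : muC lam x = x 0 * x 1 + lam 0 1 := by
  have huniv : (Finset.univ : Finset (Fin 2)).erase 0 = {1} := by decide
  rw [muC_eq_muCOn_univ, muCOn_eq_add_sum hsym x (Finset.mem_univ 0), huniv,
    muCOn_eq_add_sum hsym x (Finset.mem_singleton_self 1)]
  simp [muCOn_empty]

theorem muC_fin_two_ne_zero {lam : Fin 2 → Fin 2 → ℝ} (hsym : ∀ j k, lam j k = lam k j)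
    (hnonpos : ∀ j k, lam j k ≤ 0) {x : Fin 2 → ℂ}
    (hx : ∀ i, 2 * Real.sqrt (BG 2 lam) < ‖x i‖) : muC lam x ≠ 0 := by
  have hsq : (2 * Real.sqrt (BG 2 lam)) ^ 2 = -lam 0 1 := by
    rw [mul_pow, Real.sq_sqrt (BG_nonneg hnonpos), BG_two]
    ring
  have hprod : (2 * Real.sqrt (BG 2 lam)) ^ 2 < ‖x 0‖ * ‖x 1‖ := by
    rw [sq]
    exact mul_lt_mul'' (hx 0) (hx 1) (by positivity) (by positivity)
  rw [muC_fin_two hsym]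
  intro h
  have hnorm : ‖x 0‖ * ‖x 1‖ = -lam 0 1 := by
    rw [← norm_mul, eq_neg_of_add_eq_zero_left h, norm_neg, Complex.norm_real,
      Real.norm_of_nonpos (hnonpos 0 1)]
  linarith

theorem stmt_0_general (n : ℕ) (lam : Fin n → Fin n → ℝ)
    (hsym : ∀ j k, lam j k = lam k j) (hnonpos : ∀ j k, lam j k ≤ 0)
    (x : Fin n → ℂ)
    (hx : (∀ i, 0 < (x i).im) ∨ (∀ i, 2 * Real.sqrt (BG n lam) < ‖x i‖)) :
    muC lam x ≠ 0 := by
  rcases hx with hx | hx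
  · exact muC_ne_zero_of_forall_im_pos hsym hnonpos hx
  obtain rfl | hn := eq_or_ne n 2
  · exact muC_fin_two_ne_zero hsym hnonpos hx
  have hB := Real.sq_sqrt (BG_nonneg hnonpos (lam := lam))
  refine muC_ne_zero_of_norm_gt hsym hnonpos (Real.sqrt_nonneg _) (fun v T hT hcard => ?_)
    (fun v => ?_) hx
  · rw [hB]
    exact sum_neg_le_BG (by omega) hnonpos hT hcard
  · rw [hB]
    exact sum_erase_neg_le_two_mul_BG hn hnonpos v

/-- (Heilmann–Lieb) If `Im(x i) > 0` for every vertex `i`, or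
`|x i| > 2√(B_G)` for every vertex `i`, then `μ(G)(x₁,…,xₙ) ≠ 0`. -/
theorem stmt_0 (n : ℕ) (hn : 0 < n) (lam : Fin n → Fin n → ℝ)
    (hsym : ∀ j k, lam j k = lam k j) (hnonpos : ∀ j k, lam j k ≤ 0)
    (hdiag : ∀ i, lam i i = 0) (x : Fin n → ℂ)
    (hx : (∀ i, 0 < (x i).im) ∨ (∀ i, 2 * Real.sqrt (BG n lam) < ‖x i‖)) :
    muC lam x ≠ 0 :=
  stmt_0_general n lam hsym hnonpos x hx
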